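/- Let d, N ∈ ℕ, γ > β > 0, and let (a_ij), (b_ij) be symmetric N×N real matrices with zero diagonal, with a_ij > 0 and b_ij > 0 for all i ≠ j, satisfying the strict triangle inequality a_ik + a_kj > a_ij and b_ik + b_kj > b_ij for all pairwise distinct i, j, k. Then for every u ∈ ℳ and every 0 < h ≤ h₀: E_h(u) ≥ (√h₀/(√h + √h₀))^{d+1} · E_{h₀}(u). -/

import Mathlib

/-!
The energy is an average of correlation functionals against heat kernels,
`E_h(u) = h^{-1/2} ∫ (G_γ(y) F_a(√h y) + G_β(y) F_b(√h y)) dy` with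
`F_c(z) = Σ_{i,j} c_ij ∫_{[0,1)^d} u_i(x) u_j(x - z) dx`. The triangle inequality for `c` makes
`F_c` subadditive, and subadditivity together with the radial monotonicity of the heat kernel
compares these averages at the scales `√h` and `√h₀`.
-/

open Real MeasureTheory Filter Topology

/-- The `d`-dimensional heat kernel `G_t(z) = (4πt)^{-d/2} exp(-|z|²/(4t))`. -/
noncomputable def heatK (d : ℕ) (t : ℝ) (z : Fin d → ℝ) : ℝ :=
  (4 * Real.pi * t) ^ (-(d : ℝ) / 2) * Real.exp (-(∑ i, z i ^ 2) / (4 * t))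

/-- The rescaled kernel `K^h_ij(z) = h^{-d/2}·(a_ij G_γ + b_ij G_β)(z/√h)`. -/
noncomputable def Khij (d : ℕ) (γ β aij bij h : ℝ) (z : Fin d → ℝ) : ℝ :=
  h ^ (-(d : ℝ) / 2) *
    (aij * heatK d γ ((Real.sqrt h)⁻¹ • z) + bij * heatK d β ((Real.sqrt h)⁻¹ • z))

/-- Convolution `(K*u)(x) = ∫ K(z) u(x−z) dz`. -/
noncomputable def conv {d : ℕ} (K : (Fin d → ℝ) → ℝ) (u : (Fin d → ℝ) → ℝ)
    (x : Fin d → ℝ) : ℝ :=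
  ∫ z, K z * u (x - z)

/-- The unit box `[0,1)^d`. -/
def unitBox (d : ℕ) : Set (Fin d → ℝ) := Set.univ.pi fun _ => Set.Ico (0 : ℝ) 1

/-- `ℤ^d`-periodicity. -/
def ZPeriodic {d : ℕ} {α : Type*} (u : (Fin d → ℝ) → α) : Prop :=
  ∀ (x : Fin d → ℝ) (k : Fin d → ℤ), u (x + fun i => (k i : ℝ)) = u x

/-- Membership in `ℳ`: measurable `ℤ^d`-periodic functions with values in `[0,1]^N`
summing to `1` a.e. -/
def memM {d N : ℕ} (u : (Fin d → ℝ) → Fin N → ℝ) : Prop :=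
  Measurable u ∧ ZPeriodic u ∧ (∀ x i, u x i ∈ Set.Icc (0 : ℝ) 1) ∧
    ∀ᵐ x ∂(volume : Measure (Fin d → ℝ)), ∑ i, u x i = 1

/-- Membership in `𝒜`: elements of `ℳ` with values in `{0,1}^N`. -/
def memA {d N : ℕ} (u : (Fin d → ℝ) → Fin N → ℝ) : Prop :=
  memM u ∧ ∀ x i, u x i = 0 ∨ u x i = 1

/-- The approximate energy `E_h(u) = h^{-1/2} Σ_{i,j} ∫_{[0,1)^d} u_i K^h_ij * u_j dx`. -/
noncomputable def Eh {d N : ℕ} (γ β : ℝ) (a b : Fin N → Fin N → ℝ) (h : ℝ)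
    (u : (Fin d → ℝ) → Fin N → ℝ) : ℝ :=
  (Real.sqrt h)⁻¹ * ∑ i, ∑ j, ∫ x in unitBox d,
    u x i * conv (Khij d γ β (a i j) (b i j) h) (fun y => u y j) x

/-- The squared distance
`d_h(u,v)² = -2√h Σ_{i,j} ∫_{[0,1)^d} (u_i-v_i) K^h_ij * (u_j-v_j) dx`. -/
noncomputable def dsq {d N : ℕ} (γ β : ℝ) (a b : Fin N → Fin N → ℝ) (h : ℝ)
    (u v : (Fin d → ℝ) → Fin N → ℝ) : ℝ :=
  -2 * Real.sqrt h * ∑ i, ∑ j, ∫ x in unitBox d,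
    (u x i - v x i) * conv (Khij d γ β (a i j) (b i j) h) (fun y => u y j - v y j) x

section HeatKernel

variable {d : ℕ} {t : ℝ}

lemma heatK_nonneg (ht : 0 ≤ t) (z : Fin d → ℝ) : 0 ≤ heatK d t z :=
  mul_nonneg (Real.rpow_nonneg (by positivity) _) (Real.exp_pos _).le

lemma measurable_heatK (d : ℕ) (t : ℝ) : Measurable (heatK d t) := by
  unfold heatK
  fun_prop

lemma integrable_heatK (ht : 0 < t) : Integrable (heatK d t) := by
  have hprod : heatK d t = fun z => (4 * π * t) ^ (-(d : ℝ) / 2) *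
      ∏ i, Real.exp (-(4 * t)⁻¹ * z i ^ 2) := by
    ext z
    rw [heatK, ← Real.exp_sum, ← Finset.mul_sum]
    congr 2
    ring
  rw [hprod]
  exact (Integrable.fintype_prod fun _ => integrable_exp_neg_mul_sq (by positivity)).const_mul _

lemma heatK_smul_le (ht : 0 ≤ t) {c : ℝ} (hc : 1 ≤ c) (z : Fin d → ℝ) :
    heatK d t (c • z) ≤ heatK d t z := by
  have hsq : ∑ i, z i ^ 2 ≤ ∑ i, (c • z) i ^ 2 := Finset.sum_le_sum fun i _ => by
    rw [Pi.smul_apply, smul_eq_mul, mul_pow]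
    exact le_mul_of_one_le_left (sq_nonneg _) (one_le_pow₀ hc)
  unfold heatK
  gcongr

lemma integrable_Khij {γ β : ℝ} (hγ : 0 < γ) (hβ : 0 < β) (aij bij : ℝ) {h : ℝ} (hh : 0 < h) :
    Integrable (Khij d γ β aij bij h) :=
  ((((integrable_heatK hγ).const_mul aij).add ((integrable_heatK hβ).const_mul bij)).comp_smul
    (inv_ne_zero (Real.sqrt_pos.2 hh).ne')).const_mul _

lemma integral_Khij_mul (γ β aij bij : ℝ) {h : ℝ} (hh : 0 < h) (g : (Fin d → ℝ) → ℝ) :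
    ∫ z, Khij d γ β aij bij h z * g z =
      ∫ w, (aij * heatK d γ w + bij * heatK d β w) * g (Real.sqrt h • w) := by
  have hs : 0 < Real.sqrt h := Real.sqrt_pos.2 hh
  have hcomp := Measure.integral_comp_smul (volume : Measure (Fin d → ℝ))
    (fun z => Khij d γ β aij bij h z * g z) (Real.sqrt h)
  rw [Module.finrank_fin_fun, abs_of_pos (inv_pos.2 (pow_pos hs d)), smul_eq_mul] at hcomp
  have hpow : Real.sqrt h ^ d * h ^ (-(d : ℝ) / 2) = 1 := by
    rw [Real.sqrt_eq_rpow, ← Real.rpow_natCast, ← Real.rpow_mul hh.le, ← Real.rpow_add hh,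
      show 1 / 2 * (d : ℝ) + -(d : ℝ) / 2 = 0 by ring, Real.rpow_zero]
  calc ∫ z, Khij d γ β aij bij h z * g z
      = Real.sqrt h ^ d * ∫ w, Khij d γ β aij bij h (Real.sqrt h • w) * g (Real.sqrt h • w) := by
        rw [hcomp, ← mul_assoc, mul_inv_cancel₀ (pow_pos hs d).ne', one_mul]
    _ = Real.sqrt h ^ d * h ^ (-(d : ℝ) / 2) *
          ∫ w, (aij * heatK d γ w + bij * heatK d β w) * g (Real.sqrt h • w) := by
        simp only [Khij, inv_smul_smul₀ hs.ne', mul_assoc, integral_const_mul]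
    _ = _ := by rw [hpow, one_mul]

end HeatKernel

open Pointwise

section UnitBox

variable {d : ℕ}

lemma measurableSet_unitBox (d : ℕ) : MeasurableSet (unitBox d) :=
  MeasurableSet.univ_pi fun _ => measurableSet_Ico

lemma volume_unitBox (d : ℕ) : volume (unitBox d) = 1 := by
  simp [unitBox, volume_pi_pi, Real.volume_Ico]

instance (d : ℕ) : IsFiniteMeasure (volume.restrict (unitBox d)) :=
  isFiniteMeasure_restrict.2 (by simp [volume_unitBox])

lemma integrableOn_unitBox_mul {v w : (Fin d → ℝ) → ℝ} (hv : Measurable v) (hw : Measurable w)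
    (hv1 : ∀ x, v x ∈ Set.Icc (0 : ℝ) 1) (hw1 : ∀ x, w x ∈ Set.Icc (0 : ℝ) 1) :
    IntegrableOn (fun x => v x * w x) (unitBox d) :=
  Integrable.of_bound (hv.mul hw).aestronglyMeasurable 1 <| ae_of_all _ fun x => by
    rw [Real.norm_eq_abs, abs_of_nonneg (mul_nonneg (hv1 x).1 (hw1 x).1)]
    exact mul_le_one₀ (hv1 x).2 (hw1 x).1 (hw1 x).2

/-- The unit box is a fundamental domain of `ℤ^d`, and so is each of its translates. -/
lemma ZPeriodic.setIntegral_unitBox_sub {g : (Fin d → ℝ) → ℝ} (hg : ZPeriodic g)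
    (z : Fin d → ℝ) : ∫ x in unitBox d, g (x - z) = ∫ x in unitBox d, g x := by
  let L := (Submodule.span ℤ (Set.range (Pi.basisFun ℝ (Fin d)))).toAddSubgroup
  have : Countable L :=
    inferInstanceAs (Countable (Submodule.span ℤ (Set.range (Pi.basisFun ℝ (Fin d)))))
  have hbox : IsAddFundamentalDomain L (unitBox d) := by
    have h := ZSpan.isAddFundamentalDomain' (Pi.basisFun ℝ (Fin d)) volume
    rwa [ZSpan.fundamentalDomain_pi_basisFun] at h
  have hinv : ∀ (l : L) (x : Fin d → ℝ), g (l +ᵥ x) = g x := by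
    rintro ⟨l, hl⟩ x
    have hint : ∀ i, ∃ k : ℤ, (k : ℝ) = l i := fun i => by
      simpa using ((Pi.basisFun ℝ (Fin d)).mem_span_iff_repr_mem ℤ l).1 hl i
    choose k hk using hint
    have hl : l = fun i => (k i : ℝ) := funext fun i => (hk i).symm
    change g (l + x) = g x
    rw [add_comm, hl]
    exact hg x k
  calc ∫ x in unitBox d, g (x - z)
      = ∫ x in (-z) +ᵥ unitBox d, g x := by
        rw [← Set.image_vadd]
        simp only [vadd_eq_add]
        rw [(measurePreserving_add_left volume (-z)).setIntegral_image_emb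
          (MeasurableEquiv.addLeft (-z)).measurableEmbedding]
        simp [neg_add_eq_sub]
    _ = ∫ x in unitBox d, g x := (hbox.vadd_of_comm (-z)).setIntegral_eq hbox hinv

end UnitBox

noncomputable def boxCorr {d : ℕ} (v w : (Fin d → ℝ) → ℝ) (z : Fin d → ℝ) : ℝ :=
  ∫ x in unitBox d, v x * w (x - z)

section BoxCorr

variable {d : ℕ} {v w : (Fin d → ℝ) → ℝ}

lemma boxCorr_mem_Icc (hv : Measurable v) (hw : Measurable w)
    (hv1 : ∀ x, v x ∈ Set.Icc (0 : ℝ) 1) (hw1 : ∀ x, w x ∈ Set.Icc (0 : ℝ) 1)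
    (z : Fin d → ℝ) : boxCorr v w z ∈ Set.Icc (0 : ℝ) 1 := by
  have hint := integrableOn_unitBox_mul hv (hw.comp (measurable_id.sub_const z)) hv1
    (fun x => hw1 (x - z))
  refine ⟨setIntegral_nonneg (measurableSet_unitBox d) fun x _ =>
    mul_nonneg (hv1 x).1 (hw1 _).1, ?_⟩
  calc boxCorr v w z ≤ ∫ _ in unitBox d, (1 : ℝ) :=
        setIntegral_mono hint (integrableOn_const (by simp [volume_unitBox])) fun x =>
          mul_le_one₀ (hv1 x).2 (hw1 _).1 (hw1 _).2
    _ = 1 := by simp [measureReal_def, volume_unitBox]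

lemma measurable_boxCorr (hv : Measurable v) (hw : Measurable w) : Measurable (boxCorr v w) :=
  (((hv.comp measurable_snd).mul (hw.comp (measurable_snd.sub measurable_fst))).stronglyMeasurable
    |>.integral_prod_right' (ν := volume.restrict (unitBox d))).measurable

lemma integrable_heatK_mul_boxCorr {t : ℝ} (ht : 0 < t) (hv : Measurable v) (hw : Measurable w)
    (hv1 : ∀ x, v x ∈ Set.Icc (0 : ℝ) 1) (hw1 : ∀ x, w x ∈ Set.Icc (0 : ℝ) 1) (s : ℝ) :
    Integrable (fun y => heatK d t y * boxCorr v w (s • y)) :=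
  (integrable_heatK ht).mul_bdd
    ((measurable_boxCorr hv hw).comp (measurable_const_smul s)).aestronglyMeasurable
    (c := 1) <| ae_of_all _ fun y => by
      have h := boxCorr_mem_Icc hv hw hv1 hw1 (s • y)
      rw [Real.norm_eq_abs, abs_of_nonneg h.1]
      exact h.2

lemma setIntegral_mul_conv {K : (Fin d → ℝ) → ℝ} (hK : Integrable K)
    (hv : Measurable v) (hw : Measurable w)
    (hv1 : ∀ x, v x ∈ Set.Icc (0 : ℝ) 1) (hw1 : ∀ x, w x ∈ Set.Icc (0 : ℝ) 1) :
    ∫ x in unitBox d, v x * conv K w x = ∫ z, K z * boxCorr v w z := by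
  have hprod : Integrable (Function.uncurry fun x z => v x * (K z * w (x - z)))
      ((volume.restrict (unitBox d)).prod volume) := by
    refine ((integrable_const (1 : ℝ)).mul_prod hK.abs).mono'
      ((hv.comp measurable_fst).aestronglyMeasurable.mul (hK.1.comp_snd.mul
        (hw.comp (measurable_fst.sub measurable_snd)).aestronglyMeasurable)) ?_
    refine ae_of_all _ fun p => ?_
    simp only [Function.uncurry, norm_mul, Real.norm_eq_abs, one_mul,
      abs_of_nonneg (hv1 p.1).1, abs_of_nonneg (hw1 (p.1 - p.2)).1]
    exact (mul_le_of_le_one_left (mul_nonneg (abs_nonneg _) (hw1 _).1) (hv1 _).2).trans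
      (mul_le_of_le_one_right (abs_nonneg _) (hw1 _).2)
  calc ∫ x in unitBox d, v x * conv K w x
      = ∫ x in unitBox d, ∫ z, v x * (K z * w (x - z)) := by
        simp only [conv, integral_const_mul]
    _ = ∫ z, ∫ x in unitBox d, v x * (K z * w (x - z)) := integral_integral_swap hprod
    _ = ∫ z, K z * boxCorr v w z := by
        simp only [boxCorr, ← integral_const_mul, mul_left_comm]

end BoxCorr

lemma sum_sum_mul_mul_le_of_triangle {ι : Type*} [Fintype ι] {c : ι → ι → ℝ}
    (hc : ∀ i j k, c i j ≤ c i k + c k j) {p q r : ι → ℝ}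
    (hp : ∀ i, 0 ≤ p i) (hq : ∀ i, 0 ≤ q i) (hr : ∀ i, 0 ≤ r i)
    (hp1 : ∑ i, p i = 1) (hq1 : ∑ i, q i = 1) (hr1 : ∑ i, r i = 1) :
    ∑ i, ∑ j, c i j * (p i * r j) ≤
      ∑ i, ∑ j, c i j * (p i * q j) + ∑ i, ∑ j, c i j * (q i * r j) :=
  calc ∑ i, ∑ j, c i j * (p i * r j)
      = ∑ i, ∑ j, ∑ k, c i j * (p i * q k * r j) := by
        simp_rw [mul_right_comm (p _) (q _), ← mul_assoc _ (p _ * r _), ← Finset.mul_sum, hq1,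
          mul_one]
    _ ≤ ∑ i, ∑ j, ∑ k, (c i k + c k j) * (p i * q k * r j) := by
        gcongr with i _ j _ k _
        · exact mul_nonneg (mul_nonneg (hp i) (hq k)) (hr j)
        · exact hc i j k
    _ = ∑ i, ∑ k, c i k * (p i * q k) + ∑ k, ∑ j, c k j * (q k * r j) := by
        simp_rw [add_mul, Finset.sum_add_distrib]
        congr 1
        · have hfactor : ∀ i j k, c i k * (p i * q k * r j) = c i k * (p i * q k) * r j :=
            fun _ _ _ => by ring
          refine Finset.sum_congr rfl fun i _ => ?_
          rw [Finset.sum_comm]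
          simp_rw [hfactor, ← Finset.mul_sum, hr1, mul_one]
        · have hfactor : ∀ i j k, c k j * (p i * q k * r j) = p i * (c k j * (q k * r j)) :=
            fun _ _ _ => by ring
          simp_rw [hfactor, ← Finset.mul_sum, ← Finset.sum_mul, hp1, one_mul]
          exact Finset.sum_comm

noncomputable def weightedCorr {d N : ℕ} (c : Fin N → Fin N → ℝ) (u : (Fin d → ℝ) → Fin N → ℝ)
    (z : Fin d → ℝ) : ℝ :=
  ∑ i, ∑ j, c i j * boxCorr (fun x => u x i) (fun x => u x j) z

section WeightedCorr

variable {d N : ℕ} {u : (Fin d → ℝ) → Fin N → ℝ} {c : Fin N → Fin N → ℝ}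

lemma memM.measurable_apply (hu : memM u) (i : Fin N) : Measurable fun x => u x i :=
  (measurable_pi_apply i).comp hu.1

lemma boxCorr_mem_Icc_of_memM (hu : memM u) (i j : Fin N) (z : Fin d → ℝ) :
    boxCorr (fun x => u x i) (fun x => u x j) z ∈ Set.Icc (0 : ℝ) 1 :=
  boxCorr_mem_Icc (hu.measurable_apply i) (hu.measurable_apply j) (fun x => hu.2.2.1 x i)
    (fun x => hu.2.2.1 x j) z

lemma measurable_weightedCorr (hu : memM u) (c : Fin N → Fin N → ℝ) :
    Measurable (weightedCorr c u) :=
  Finset.measurable_sum _ fun i _ => Finset.measurable_sum _ fun j _ =>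
    (measurable_boxCorr (hu.measurable_apply i) (hu.measurable_apply j)).const_mul _

lemma weightedCorr_nonneg (hu : memM u) (hc : ∀ i j, 0 ≤ c i j) (z : Fin d → ℝ) :
    0 ≤ weightedCorr c u z :=
  Finset.sum_nonneg fun i _ => Finset.sum_nonneg fun j _ =>
    mul_nonneg (hc i j) (boxCorr_mem_Icc_of_memM hu i j z).1

lemma weightedCorr_le (hu : memM u) (hc : ∀ i j, 0 ≤ c i j) (z : Fin d → ℝ) :
    weightedCorr c u z ≤ ∑ i, ∑ j, c i j :=
  Finset.sum_le_sum fun i _ => Finset.sum_le_sum fun j _ =>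
    mul_le_of_le_one_right (hc i j) (boxCorr_mem_Icc_of_memM hu i j z).2

lemma integrableOn_unitBox_sum_sum_mul {p q : (Fin d → ℝ) → Fin N → ℝ}
    (hp : Measurable p) (hq : Measurable q)
    (hp1 : ∀ x i, p x i ∈ Set.Icc (0 : ℝ) 1) (hq1 : ∀ x i, q x i ∈ Set.Icc (0 : ℝ) 1) :
    IntegrableOn (fun x => ∑ i, ∑ j, c i j * (p x i * q x j)) (unitBox d) :=
  integrable_finsetSum _ fun i _ => integrable_finsetSum _ fun j _ =>
    (integrableOn_unitBox_mul ((measurable_pi_apply i).comp hp) ((measurable_pi_apply j).comp hq)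
      (fun x => hp1 x i) (fun x => hq1 x j)).const_mul _

lemma weightedCorr_eq_setIntegral (hu : memM u) (c : Fin N → Fin N → ℝ) (z : Fin d → ℝ) :
    weightedCorr c u z = ∫ x in unitBox d, ∑ i, ∑ j, c i j * (u x i * u (x - z) j) := by
  have hint : ∀ i j, IntegrableOn (fun x => c i j * (u x i * u (x - z) j)) (unitBox d) :=
    fun i j => (integrableOn_unitBox_mul (hu.measurable_apply i)
      ((hu.measurable_apply j).comp (measurable_id.sub_const z)) (fun x => hu.2.2.1 x i)
      (fun x => hu.2.2.1 _ j)).const_mul _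
  rw [integral_finsetSum _ fun i _ => integrable_finsetSum _ fun j _ => hint i j]
  refine Finset.sum_congr rfl fun i _ => ?_
  rw [integral_finsetSum _ fun j _ => hint i j]
  simp only [boxCorr, integral_const_mul]

/-- Subadditivity of `F_c` comes from the triangle inequality for `c`, applied pointwise to the
probability vectors `u(x)`, `u(x - z)`, `u(x - z - w)`, and from the periodicity of `u`. -/
lemma weightedCorr_add_le (hu : memM u) (hc : ∀ i j k, c i j ≤ c i k + c k j)
    (z w : Fin d → ℝ) : weightedCorr c u (z + w) ≤ weightedCorr c u z + weightedCorr c u w := by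
  have ⟨hmeas, hper, hIcc, hsum⟩ := hu
  let Φ : (Fin d → ℝ) → (Fin d → ℝ) → ℝ := fun v x => ∑ i, ∑ j, c i j * (u x i * u (x - v) j)
  have hΦper : ZPeriodic (Φ w) := fun x k => by
    simp only [Φ, add_sub_right_comm]
    rw [hper x k, hper (x - w) k]
  have hΦint : ∀ v, IntegrableOn (Φ v) (unitBox d) := fun v =>
    integrableOn_unitBox_sum_sum_mul hmeas (hmeas.comp (measurable_id.sub_const v)) hIcc
      (fun x => hIcc _)
  have hΦint_sub : IntegrableOn (fun x => Φ w (x - z)) (unitBox d) :=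
    integrableOn_unitBox_sum_sum_mul (hmeas.comp (measurable_id.sub_const z))
      (hmeas.comp ((measurable_id.sub_const z).sub_const w)) (fun x => hIcc _) (fun x => hIcc _)
  have hsum_sub : ∀ v, ∀ᵐ x, ∑ i, u (x - v) i = 1 := fun v =>
    (measurePreserving_sub_right volume v).quasiMeasurePreserving.ae hsum
  have hpointwise : ∀ᵐ x ∂volume.restrict (unitBox d), Φ (z + w) x ≤ Φ z x + Φ w (x - z) := by
    refine ae_restrict_of_ae ?_
    filter_upwards [hsum, hsum_sub z, hsum_sub (z + w)] with x hx hxz hxzw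
    simp only [Φ, ← sub_sub]
    exact sum_sum_mul_mul_le_of_triangle hc (fun i => (hIcc _ i).1) (fun i => (hIcc _ i).1)
      (fun i => (hIcc _ i).1) hx hxz (by rwa [sub_sub])
  calc weightedCorr c u (z + w)
      = ∫ x in unitBox d, Φ (z + w) x := weightedCorr_eq_setIntegral hu c (z + w)
    _ ≤ ∫ x in unitBox d, (Φ z x + Φ w (x - z)) :=
        integral_mono_ae (hΦint (z + w)) ((hΦint z).add hΦint_sub) hpointwise
    _ = weightedCorr c u z + weightedCorr c u w := by
        rw [integral_add (hΦint z) hΦint_sub, hΦper.setIntegral_unitBox_sub,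
          weightedCorr_eq_setIntegral hu, weightedCorr_eq_setIntegral hu]

end WeightedCorr

section Energy

variable {d N : ℕ} {u : (Fin d → ℝ) → Fin N → ℝ}

lemma integral_heatK_mul_weightedCorr {t : ℝ} (ht : 0 < t) (hu : memM u)
    (c : Fin N → Fin N → ℝ) (s : ℝ) :
    ∫ y, heatK d t y * weightedCorr c u (s • y) =
      ∑ i, ∑ j, c i j * ∫ y, heatK d t y * boxCorr (fun x => u x i) (fun x => u x j) (s • y) := by
  have hint : ∀ i j, Integrable fun y =>
      c i j * (heatK d t y * boxCorr (fun x => u x i) (fun x => u x j) (s • y)) := fun i j =>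
    (integrable_heatK_mul_boxCorr ht (hu.measurable_apply i) (hu.measurable_apply j)
      (fun x => hu.2.2.1 x i) (fun x => hu.2.2.1 x j) s).const_mul _
  simp_rw [weightedCorr, Finset.mul_sum, mul_left_comm (heatK d t _)]
  rw [integral_finsetSum _ fun i _ => integrable_finsetSum _ fun j _ => hint i j]
  refine Finset.sum_congr rfl fun i _ => ?_
  rw [integral_finsetSum _ fun j _ => hint i j]
  simp only [integral_const_mul]

lemma Eh_eq {γ β : ℝ} (hγ : 0 < γ) (hβ : 0 < β) (hu : memM u) (a b : Fin N → Fin N → ℝ)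
    {h : ℝ} (hh : 0 < h) :
    Eh γ β a b h u = (Real.sqrt h)⁻¹ *
      ((∫ y, heatK d γ y * weightedCorr a u (Real.sqrt h • y)) +
        ∫ y, heatK d β y * weightedCorr b u (Real.sqrt h • y)) := by
  have hterm : ∀ i j,
      ∫ x in unitBox d, u x i * conv (Khij d γ β (a i j) (b i j) h) (fun y => u y j) x =
        a i j * (∫ y, heatK d γ y * boxCorr (fun x => u x i) (fun x => u x j) (Real.sqrt h • y)) +
        b i j * ∫ y, heatK d β y * boxCorr (fun x => u x i) (fun x => u x j) (Real.sqrt h • y) := by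
    intro i j
    have hint := fun {t : ℝ} (ht : 0 < t) => integrable_heatK_mul_boxCorr ht
      (hu.measurable_apply i) (hu.measurable_apply j) (fun x => hu.2.2.1 x i)
      (fun x => hu.2.2.1 x j) (Real.sqrt h)
    rw [setIntegral_mul_conv (integrable_Khij hγ hβ _ _ hh) (hu.measurable_apply i)
      (hu.measurable_apply j) (fun x => hu.2.2.1 x i) (fun x => hu.2.2.1 x j),
      integral_Khij_mul _ _ _ _ hh, ← integral_const_mul, ← integral_const_mul,
      ← integral_add ((hint hγ).const_mul _) ((hint hβ).const_mul _)]
    simp only [add_mul, mul_assoc]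
  rw [Eh, integral_heatK_mul_weightedCorr hγ hu, integral_heatK_mul_weightedCorr hβ hu,
    ← Finset.sum_add_distrib]
  simp only [hterm, Finset.sum_add_distrib]

end Energy

lemma apply_nsmul_le_of_subadditive {M : Type*} [AddMonoid M] {F : M → ℝ}
    (hF : ∀ x y, F (x + y) ≤ F x + F y) {n : ℕ} (hn : n ≠ 0) (x : M) :
    F (n • x) ≤ n * F x := by
  induction n with
  | zero => exact absurd rfl hn
  | succ n ih =>
    rcases eq_or_ne n 0 with rfl | hn'
    · simp
    · calc F ((n + 1) • x) ≤ F (n • x) + F x := by rw [succ_nsmul]; exact hF _ _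
        _ ≤ n * F x + F x := by gcongr; exact ih hn'
        _ = (n + 1 : ℕ) * F x := by push_cast; ring

section Dilation

variable {E : Type*} [NormedAddCommGroup E] [NormedSpace ℝ E] [MeasurableSpace E]
  {μ : Measure E} {G F : E → ℝ}

lemma integrable_mul_comp_smul [BorelSpace E] (hG : Integrable G μ) (hF : ∀ z, 0 ≤ F z)
    (hF_meas : Measurable F) {M : ℝ} (hF_le : ∀ z, F z ≤ M) (r : ℝ) :
    Integrable (fun y => G y * F (r • y)) μ :=
  hG.mul_bdd (hF_meas.comp (measurable_const_smul r)).aestronglyMeasurable (c := M)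
    (ae_of_all _ fun y => by rw [Real.norm_eq_abs, abs_of_nonneg (hF _)]; exact hF_le _)

lemma integral_mul_comp_nsmul_le (hG : ∀ y, 0 ≤ G y) (hF : ∀ z, 0 ≤ F z)
    (hF_add : ∀ z w, F (z + w) ≤ F z + F w) {r : ℝ}
    (hint : Integrable (fun y => G y * F (r • y)) μ) {n : ℕ} (hn : n ≠ 0) :
    ∫ y, G y * F ((n * r) • y) ∂μ ≤ n * ∫ y, G y * F (r • y) ∂μ := by
  rw [← integral_const_mul]
  refine integral_mono_of_nonneg (ae_of_all _ fun y => mul_nonneg (hG y) (hF _))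
    (hint.const_mul _) (ae_of_all _ fun y => ?_)
  calc G y * F ((n * r) • y) ≤ G y * (n * F (r • y)) := by
        rw [mul_smul, Nat.cast_smul_eq_nsmul]
        exact mul_le_mul_of_nonneg_left (apply_nsmul_le_of_subadditive hF_add hn _) (hG y)
    _ = n * (G y * F (r • y)) := mul_left_comm _ _ _

lemma integral_mul_comp_smul_le_of_le_one [FiniteDimensional ℝ E] [BorelSpace E]
    [μ.IsAddHaarMeasure] (hG : ∀ y, 0 ≤ G y) (hG_smul : ∀ c : ℝ, 1 ≤ c → ∀ y, G (c • y) ≤ G y)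
    (hF : ∀ z, 0 ≤ F z) {r : ℝ} (hint : Integrable (fun y => G y * F (r • y)) μ)
    {c : ℝ} (hc : 0 < c) (hc1 : c ≤ 1) :
    ∫ y, G y * F ((c * r) • y) ∂μ ≤ (c ^ Module.finrank ℝ E)⁻¹ * ∫ y, G y * F (r • y) ∂μ := by
  have hcomp := Measure.integral_comp_smul μ (fun y => G (c⁻¹ • y) * F (r • y)) c
  rw [abs_of_pos (by positivity), smul_eq_mul] at hcomp
  calc ∫ y, G y * F ((c * r) • y) ∂μ = ∫ y, G (c⁻¹ • c • y) * F (r • c • y) ∂μ := by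
        simp only [inv_smul_smul₀ hc.ne', smul_smul, mul_comm c r]
    _ = (c ^ Module.finrank ℝ E)⁻¹ * ∫ y, G (c⁻¹ • y) * F (r • y) ∂μ := hcomp
    _ ≤ (c ^ Module.finrank ℝ E)⁻¹ * ∫ y, G y * F (r • y) ∂μ := by
        refine mul_le_mul_of_nonneg_left (integral_mono_of_nonneg ?_ hint ?_) (by positivity)
        · exact ae_of_all _ fun y => mul_nonneg (hG _) (hF _)
        · exact ae_of_all _ fun y =>
            mul_le_mul_of_nonneg_right (hG_smul _ ((one_le_inv₀ hc).2 hc1) y) (hF _)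

/-- Write `s₀ = n · (c s)` with `n = ⌈s₀ / s⌉` and `c ≤ 1`: subadditivity costs the factor `n`,
the dilation `y ↦ c y` of the radially decreasing kernel costs `c^{-dim}`. -/
theorem integral_mul_comp_smul_dilation_le [FiniteDimensional ℝ E] [BorelSpace E]
    [μ.IsAddHaarMeasure] (hG : ∀ y, 0 ≤ G y) (hG_smul : ∀ c : ℝ, 1 ≤ c → ∀ y, G (c • y) ≤ G y)
    (hG_int : Integrable G μ)
    (hF : ∀ z, 0 ≤ F z) (hF_add : ∀ z w, F (z + w) ≤ F z + F w) (hF_meas : Measurable F)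
    {M : ℝ} (hF_le : ∀ z, F z ≤ M) {s s₀ : ℝ} (hs : 0 < s) (hs₀ : 0 < s₀) :
    (s₀ / (s + s₀)) ^ (Module.finrank ℝ E + 1) * (s₀⁻¹ * ∫ y, G y * F (s₀ • y) ∂μ) ≤
      s⁻¹ * ∫ y, G y * F (s • y) ∂μ := by
  set D := Module.finrank ℝ E
  set I := ∫ y, G y * F (s • y) ∂μ
  have hint : ∀ r : ℝ, Integrable (fun y => G y * F (r • y)) μ :=
    integrable_mul_comp_smul hG_int hF hF_meas hF_le
  have hI : 0 ≤ I := integral_nonneg fun y => mul_nonneg (hG y) (hF _)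
  set n := ⌈s₀ / s⌉₊
  have hn_ge : s₀ ≤ s * n := by
    rw [← div_le_iff₀' hs]
    exact Nat.le_ceil _
  have hn_lt : s * n < s + s₀ := by
    rw [← lt_div_iff₀' hs, add_div, div_self hs.ne', add_comm]
    exact Nat.ceil_lt_add_one (div_pos hs₀ hs).le
  have hn : n ≠ 0 := (Nat.ceil_pos.2 (div_pos hs₀ hs)).ne'
  have hn_pos : (0 : ℝ) < n := by positivity
  set c := s₀ / (s * n)
  have hc : 0 < c := by positivity
  have hc1 : c ≤ 1 := div_le_one_of_le₀ hn_ge (by positivity)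
  have hbound : ∫ y, G y * F (s₀ • y) ∂μ ≤ n * ((c ^ D)⁻¹ * I) := by
    have hs₀_eq : s₀ = n * (c * s) := by
      simp only [c]
      field_simp
    rw [hs₀_eq]
    calc ∫ y, G y * F ((n * (c * s)) • y) ∂μ ≤ n * ∫ y, G y * F ((c * s) • y) ∂μ :=
          integral_mul_comp_nsmul_le hG hF hF_add (hint _) hn
      _ ≤ n * ((c ^ D)⁻¹ * I) := by
          gcongr
          exact integral_mul_comp_smul_le_of_le_one hG hG_smul hF (hint s) hc hc1
  have hcoeff : (s₀ / (s + s₀)) ^ (D + 1) * (s₀⁻¹ * (n * ((c ^ D)⁻¹ * I))) =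
      (s * n / (s + s₀)) ^ (D + 1) * (s⁻¹ * I) := by
    simp only [c]
    rw [← inv_pow, inv_div, div_pow, div_pow, div_pow]
    field_simp
    ring
  calc (s₀ / (s + s₀)) ^ (D + 1) * (s₀⁻¹ * ∫ y, G y * F (s₀ • y) ∂μ)
      ≤ (s₀ / (s + s₀)) ^ (D + 1) * (s₀⁻¹ * (n * ((c ^ D)⁻¹ * I))) := by gcongr
    _ = (s * n / (s + s₀)) ^ (D + 1) * (s⁻¹ * I) := hcoeff
    _ ≤ s⁻¹ * I := mul_le_of_le_one_left (by positivity)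
          (pow_le_one₀ (by positivity) ((div_le_one (by positivity)).2 hn_lt.le))

end Dilation

lemma heatK_mul_weightedCorr_dilation_le {d N : ℕ} {t : ℝ} (ht : 0 < t)
    {u : (Fin d → ℝ) → Fin N → ℝ} (hu : memM u) {c : Fin N → Fin N → ℝ}
    (hc : ∀ i j, 0 ≤ c i j) (hc_tri : ∀ i j k, c i j ≤ c i k + c k j)
    {s s₀ : ℝ} (hs : 0 < s) (hs₀ : 0 < s₀) :
    (s₀ / (s + s₀)) ^ (d + 1) * (s₀⁻¹ * ∫ y, heatK d t y * weightedCorr c u (s₀ • y)) ≤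
      s⁻¹ * ∫ y, heatK d t y * weightedCorr c u (s • y) := by
  simpa only [Module.finrank_fin_fun] using
    integral_mul_comp_smul_dilation_le (μ := volume) (heatK_nonneg ht.le)
      (fun _ hc1 => heatK_smul_le ht.le hc1) (integrable_heatK ht) (weightedCorr_nonneg hu hc)
      (weightedCorr_add_le hu hc_tri) (measurable_weightedCorr hu c) (weightedCorr_le hu hc) hs hs₀

section Coefficients

variable {ι : Type*} {c : ι → ι → ℝ}

lemma nonneg_of_diag_eq_zero (hdiag : ∀ i, c i i = 0) (hpos : ∀ i j, i ≠ j → 0 < c i j)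
    (i j : ι) : 0 ≤ c i j := by
  rcases eq_or_ne i j with rfl | hij
  · exact (hdiag i).ge
  · exact (hpos i j hij).le

lemma triangle_of_strict_triangle (hdiag : ∀ i, c i i = 0) (hpos : ∀ i j, i ≠ j → 0 < c i j)
    (htri : ∀ i j k, i ≠ j → j ≠ k → i ≠ k → c i j < c i k + c k j) (i j k : ι) :
    c i j ≤ c i k + c k j := by
  have hc := nonneg_of_diag_eq_zero hdiag hpos
  rcases eq_or_ne i k with rfl | hik
  · simp [hdiag]
  rcases eq_or_ne k j with rfl | hkj
  · simp [hdiag]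
  rcases eq_or_ne i j with rfl | hij
  · rw [hdiag]
    exact add_nonneg (hc _ _) (hc _ _)
  · exact (htri i j k hij hkj.symm hik).le

end Coefficients

theorem stmt_8_general (d N : ℕ) (γ β : ℝ) (hβ0 : 0 < β) (hβγ : β < γ)
    (a b : Fin N → Fin N → ℝ)
    (hadiag : ∀ i, a i i = 0) (hbdiag : ∀ i, b i i = 0)
    (hapos : ∀ i j, i ≠ j → 0 < a i j) (hbpos : ∀ i j, i ≠ j → 0 < b i j)
    (hatri : ∀ i j k, i ≠ j → j ≠ k → i ≠ k → a i j < a i k + a k j)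
    (hbtri : ∀ i j k, i ≠ j → j ≠ k → i ≠ k → b i j < b i k + b k j)
    (u : (Fin d → ℝ) → Fin N → ℝ) (hu : memM u)
    (h h₀ : ℝ) (hh : 0 < h) (hhh₀ : h ≤ h₀) :
    (Real.sqrt h₀ / (Real.sqrt h + Real.sqrt h₀)) ^ (d + 1) * Eh γ β a b h₀ u
      ≤ Eh γ β a b h u := by
  have hγ0 : 0 < γ := hβ0.trans hβγ
  have hh₀ : 0 < h₀ := hh.trans_le hhh₀
  have hs : 0 < Real.sqrt h := Real.sqrt_pos.2 hh
  have hs₀ : 0 < Real.sqrt h₀ := Real.sqrt_pos.2 hh₀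
  rw [Eh_eq hγ0 hβ0 hu a b hh, Eh_eq hγ0 hβ0 hu a b hh₀]
  linear_combination
    heatK_mul_weightedCorr_dilation_le hγ0 hu (nonneg_of_diag_eq_zero hadiag hapos)
      (triangle_of_strict_triangle hadiag hapos hatri) hs hs₀ +
    heatK_mul_weightedCorr_dilation_le hβ0 hu (nonneg_of_diag_eq_zero hbdiag hbpos)
      (triangle_of_strict_triangle hbdiag hbpos hbtri) hs hs₀

/-- approximate monotonicity of the energies:
`E_h(u) ≥ (√h₀/(√h+√h₀))^{d+1}·E_{h₀}(u)` for `0 < h ≤ h₀`. -/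
theorem stmt_8 (d N : ℕ) (γ β : ℝ) (hβ0 : 0 < β) (hβγ : β < γ)
    (a b : Fin N → Fin N → ℝ)
    (hasymm : ∀ i j, a i j = a j i) (hbsymm : ∀ i j, b i j = b j i)
    (hadiag : ∀ i, a i i = 0) (hbdiag : ∀ i, b i i = 0)
    (hapos : ∀ i j, i ≠ j → 0 < a i j) (hbpos : ∀ i j, i ≠ j → 0 < b i j)
    (hatri : ∀ i j k, i ≠ j → j ≠ k → i ≠ k → a i j < a i k + a k j)
    (hbtri : ∀ i j k, i ≠ j → j ≠ k → i ≠ k → b i j < b i k + b k j)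
    (u : (Fin d → ℝ) → Fin N → ℝ) (hu : memM u)
    (h h₀ : ℝ) (hh : 0 < h) (hhh₀ : h ≤ h₀) :
    (Real.sqrt h₀ / (Real.sqrt h + Real.sqrt h₀)) ^ (d + 1) * Eh γ β a b h₀ u
      ≤ Eh γ β a b h u :=
  stmt_8_general d N γ β hβ0 hβγ a b hadiag hbdiag hapos hbpos hatri hbtri u hu h h₀ hh hhh₀
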